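/- arXiv:1510.01518 — 3 statements merged into one kernel-verified Lean document; each statement's English description precedes it below -/
import Mathlib

section
/- Let f = g - h where g, h : ℝ^n → ℝ are differentiable convex functions, and suppose g' is another decomposition f = g' - h' with g', h' convex differentiable, such that c := g - g' is convex. Then for any point x₀, the convexified functions f_g(x) := g(x) - h(x₀) - ∇h(x₀)ᵀ(x - x₀) and f_{g'}(x) := g'(x) - h'(x₀) - ∇h'(x₀)ᵀ(x - x₀) satisfy f_{g'}(x) ≤ f_g(x) for all x. -/
/-!
On the common difference `c = g - g' = h - h'` the two convexifications differ by
`c x - c x₀ - ⟪∇c x₀, x - x₀⟫`, which is nonnegative because the convex function `c` lies above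
its tangent at `x₀`.
-/

open Set

theorem ConvexOn.add_fderiv_le {E : Type*} [NormedAddCommGroup E] [NormedSpace ℝ E]
    {s : Set E} {c : E → ℝ} {c' : E →L[ℝ] ℝ} {x₀ x : E} (hc : ConvexOn ℝ s c)
    (hx₀ : x₀ ∈ s) (hx : x ∈ s) (hc' : HasFDerivAt c c' x₀) :
    c x₀ + c' (x - x₀) ≤ c x := by
  let ℓ : ℝ →ᵃ[ℝ] E := AffineMap.lineMap x₀ x
  have hderiv : HasDerivAt (c ∘ ℓ) (c' (x - x₀)) 0 := by
    refine HasFDerivAt.comp_hasDerivAt 0 ?_ AffineMap.hasDerivAt_lineMap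
    simpa [ℓ] using hc'
  have hslope := (hc.comp_affineMap ℓ).le_slope_of_hasDerivAt
    (by simpa [ℓ] using hx₀) (by simpa [ℓ] using hx) zero_lt_one hderiv
  simp only [slope_def_field, Function.comp_apply, ℓ, AffineMap.lineMap_apply_zero,
    AffineMap.lineMap_apply_one, sub_zero, div_one] at hslope
  linarith

theorem dominated_dcd_convexification_le_general
    {n : ℕ} (g h g' h' : EuclideanSpace ℝ (Fin n) → ℝ)
    (hhd : Differentiable ℝ h) (hh'd : Differentiable ℝ h')
    (hdec : ∀ x, g x - h x = g' x - h' x)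
    (hc : ConvexOn ℝ Set.univ (fun x => g x - g' x))
    (x₀ : EuclideanSpace ℝ (Fin n)) :
    ∀ x, g' x - (h' x₀ + inner ℝ (gradient h' x₀) (x - x₀))
      ≤ g x - (h x₀ + inner ℝ (gradient h x₀) (x - x₀)) := by
  intro x
  have hc_eq : ConvexOn ℝ univ (fun y => h y - h' y) :=
    hc.congr fun y _ => by linarith [hdec y]
  have htangent := hc_eq.add_fderiv_le (mem_univ x₀) (mem_univ x)
    ((hhd x₀).hasFDerivAt.sub (hh'd x₀).hasFDerivAt)
  simp only [sub_apply, ← inner_gradient_left] at htangent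
  linarith [hdec x]

theorem dominated_dcd_convexification_le
    {n : ℕ} (g h g' h' : EuclideanSpace ℝ (Fin n) → ℝ)
    (hg : ConvexOn ℝ Set.univ g) (hh : ConvexOn ℝ Set.univ h)
    (hg' : ConvexOn ℝ Set.univ g') (hh' : ConvexOn ℝ Set.univ h')
    (hgd : Differentiable ℝ g) (hhd : Differentiable ℝ h)
    (hg'd : Differentiable ℝ g') (hh'd : Differentiable ℝ h')
    (hdec : ∀ x, g x - h x = g' x - h' x)
    (hc : ConvexOn ℝ Set.univ (fun x => g x - g' x))
    (x₀ : EuclideanSpace ℝ (Fin n)) :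
    ∀ x, g' x - (h' x₀ + inner ℝ (gradient h' x₀) (x - x₀))
      ≤ g x - (h x₀ + inner ℝ (gradient h x₀) (x - x₀)) :=
  dominated_dcd_convexification_le_general g h g' h' hhd hh'd hdec hc x₀
end

section
/- If a polynomial p in variables x = (x₁,…,x_n) of degree 2d admits a representation p(x) = z(x)ᵀ Q z(x) where z(x) is the vector of all monomials of degree up to d and Q is a symmetric diagonally dominant matrix with nonnegative diagonal entries, then p is a sum of squares of polynomials. -/
/-!
Diagonal dominance lets each diagonal entry `Q i i` pay for `∑_{j ≠ i} |Q i j| z_i²`. Spread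
symmetrically over the pairs `{i, j}`, this turns every off-diagonal contribution into
`(|a| / 2) (z_i² + z_j²) + a z_i z_j = (|a| / 2) (z_i ± z_j)²` with `a = Q i j`, and leaves
`(Q i i - ∑_{j ≠ i} |Q i j|) z_i²`, a nonnegative multiple of a square, on the diagonal.
-/

open Finset

theorem IsSumSq.exists_fin_sum_sq {R : Type*} [Semiring R] {x : R} (hx : IsSumSq x) :
    ∃ (r : ℕ) (q : Fin r → R), x = ∑ k, q k ^ 2 := by
  induction hx with
  | zero => exact ⟨0, Fin.elim0, by simp⟩
  | sq_add a _ ih =>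
    obtain ⟨r, q, rfl⟩ := ih
    exact ⟨r + 1, Fin.cons a q, by simp [Fin.sum_univ_succ, sq]⟩

section RealAlgebra

variable {A : Type*} [CommRing A] [Algebra ℝ A]

theorem isSumSq_smul_sq {c : ℝ} (hc : 0 ≤ c) (x : A) : IsSumSq (c • x ^ 2) := by
  have : c • x ^ 2 = (√c • x) * (√c • x) := by
    rw [← sq, smul_pow, Real.sq_sqrt hc]
  exact this ▸ IsSumSq.mul_self _

theorem isSumSq_abs_div_two_smul_add_smul_mul (a : ℝ) (x y : A) :
    IsSumSq ((|a| / 2) • (x ^ 2 + y ^ 2) + a • (x * y)) := by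
  rcases le_total 0 a with ha | ha
  · convert isSumSq_smul_sq (div_nonneg ha zero_le_two) (x + y) using 1
    rw [abs_of_nonneg ha, add_sq', mul_assoc, two_mul]
    module
  · convert isSumSq_smul_sq (div_nonneg (neg_nonneg.mpr ha) zero_le_two) (x - y) using 1
    rw [abs_of_nonpos ha, sub_sq', mul_assoc, two_mul]
    module

variable {ι : Type*} [Fintype ι] [DecidableEq ι]

theorem Matrix.sum_smul_mul_eq_sub_abs_add (Q : Matrix ι ι ℝ) (z : ι → A) (i : ι) :
    ∑ j, Q i j • (z i * z j) = (Q i i - ∑ j ∈ univ.erase i, |Q i j|) • z i ^ 2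
      + ∑ j ∈ univ.erase i, (|Q i j| • z i ^ 2 + Q i j • (z i * z j)) := by
  rw [← add_sum_erase _ _ (mem_univ i), sum_add_distrib, ← sum_smul, sq]
  module

theorem Matrix.IsSymm.sum_sum_smul_mul_eq {Q : Matrix ι ι ℝ} (hQ : Q.IsSymm) (z : ι → A) :
    ∑ i, ∑ j, Q i j • (z i * z j) = ∑ i, (Q i i - ∑ j ∈ univ.erase i, |Q i j|) • z i ^ 2
      + ∑ i, ∑ j ∈ univ.erase i, ((|Q i j| / 2) • (z i ^ 2 + z j ^ 2) + Q i j • (z i * z j)) := by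
  have hswap : ∑ i, ∑ j ∈ univ.erase i, (|Q i j| / 2) • z j ^ 2
      = ∑ i, ∑ j ∈ univ.erase i, (|Q i j| / 2) • z i ^ 2 := by
    rw [sum_comm' (s := univ) (t := fun i => univ.erase i) (t' := univ)
      (s' := fun j => univ.erase j) (fun _ _ => by simp [eq_comm])]
    simp_rw [hQ.apply]
  calc ∑ i, ∑ j, Q i j • (z i * z j)
      = ∑ i, ((Q i i - ∑ j ∈ univ.erase i, |Q i j|) • z i ^ 2
          + ∑ j ∈ univ.erase i, (|Q i j| • z i ^ 2 + Q i j • (z i * z j))) :=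
        sum_congr rfl fun i _ => Q.sum_smul_mul_eq_sub_abs_add z i
    _ = _ := by
      simp only [sum_add_distrib, smul_add, hswap]
      congr 2
      simp only [← sum_add_distrib, ← add_smul, add_halves]

theorem Matrix.IsSymm.isSumSq_sum_sum_smul_mul {Q : Matrix ι ι ℝ} (hQ : Q.IsSymm)
    (hdd : ∀ i, ∑ j ∈ univ.erase i, |Q i j| ≤ Q i i) (z : ι → A) :
    IsSumSq (∑ i, ∑ j, Q i j • (z i * z j)) := by
  rw [hQ.sum_sum_smul_mul_eq z]
  exact .add (.sum fun i _ => isSumSq_smul_sq (sub_nonneg.mpr (hdd i)) _)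
    (.sum fun i _ => .sum fun j _ => isSumSq_abs_div_two_smul_add_smul_mul _ _ _)

end RealAlgebra

open MvPolynomial Finset in
theorem dd_gram_implies_sos_general
    {n m : ℕ} (p : MvPolynomial (Fin n) ℝ)
    (z : Fin m → MvPolynomial (Fin n) ℝ)
    (Q : Matrix (Fin m) (Fin m) ℝ) (hQsymm : Q.IsSymm)
    (hQdd : ∀ i, ∑ j ∈ Finset.univ.erase i, |Q i j| ≤ Q i i)
    (hrep : p = ∑ i : Fin m, ∑ j : Fin m, Q i j • (z i * z j)) :
    ∃ (r : ℕ) (q : Fin r → MvPolynomial (Fin n) ℝ),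
      p = ∑ k : Fin r, (q k) ^ 2 := by
  obtain ⟨r, q, hq⟩ := (hQsymm.isSumSq_sum_sum_smul_mul hQdd z).exists_fin_sum_sq
  exact ⟨r, q, hrep.trans hq⟩

open MvPolynomial Finset in
theorem dd_gram_implies_sos
    {n d m : ℕ} (p : MvPolynomial (Fin n) ℝ)
    (z : Fin m → MvPolynomial (Fin n) ℝ)
    (hz : ∀ i, ∃ s : Fin n →₀ ℕ, (s.sum fun _ e => e) ≤ d ∧
      z i = monomial s (1 : ℝ))
    (Q : Matrix (Fin m) (Fin m) ℝ) (hQsymm : Q.IsSymm)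
    (hQdiag : ∀ i, 0 ≤ Q i i)
    (hQdd : ∀ i, ∑ j ∈ Finset.univ.erase i, |Q i j| ≤ Q i i)
    (hrep : p = ∑ i : Fin m, ∑ j : Fin m, Q i j • (z i * z j)) :
    ∃ (r : ℕ) (q : Fin r → MvPolynomial (Fin n) ℝ),
      p = ∑ k : Fin r, (q k) ^ 2 :=
  dd_gram_implies_sos_general p z Q hQsymm hQdd hrep
end

section
/- Let f be a polynomial on ℝ^n of degree at most 2d. Then there exist polynomials g, h of degree at most 2d, both sos-convex (i.e., yᵀH_g(x)y and yᵀH_h(x)y are sums of squares of polynomials in (x,y)), such that f = g - h. -/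
open MvPolynomial in
/-- A polynomial `g` in `n` variables is sos-convex if `yᵀ H_g(x) y` is a sum of
squares of polynomials in the `2n` variables `(x, y)`. -/
def SosConvex {n : ℕ} (g : MvPolynomial (Fin n) ℝ) : Prop :=
  ∃ (r : ℕ) (q : Fin r → MvPolynomial (Fin n ⊕ Fin n) ℝ),
    ∀ (x y : Fin n → ℝ),
      ∑ i : Fin n, ∑ j : Fin n,
          y i * (eval x (pderiv i (pderiv j g))) * y j
        = ∑ k : Fin r, (eval (Sum.elim x y) (q k)) ^ 2

/-!
The sos-convex polynomials of degree at most `2d` form a convex cone, and a cone whose linear span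
is the whole space of polynomials of degree at most `2d` has every element of that space as a
difference of two of its elements. The cone contains `ℓ ^ (2d)` for every affine form `ℓ`, because
the Hessian form of `ℓ ^ (2d)` is `2d (2d - 1) ℓ ^ (2d - 2) ⟨∇ℓ, y⟩²`. A monomial of degree at
most `2d` is a product of exactly `2d` factors `xᵢ` or `1`, and polarization writes such a product
as a linear combination of `2d`-th powers of sums of the factors, which are affine forms.
-/

open MvPolynomial

open Finset in
theorem Finset.sum_powerset_neg_one_pow_card_mul_sum_compl_pow {ι R : Type*} [Fintype ι]
    [DecidableEq ι] [CommRing R] (z : ι → R) :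
    ∑ t ∈ univ.powerset, (-1) ^ #t * (∑ j ∈ tᶜ, z j) ^ Fintype.card ι
      = (Fintype.card ι).factorial * ∏ j, z j := by
  set missing : ι → Finset (ι → ι) := fun k => univ.filter fun p => ∀ i, p i ≠ k
  have hmissing (t : Finset ι) : t.inf missing = Fintype.piFinset fun _ => tᶜ := by
    ext p
    simp only [missing, mem_inf, mem_filter, mem_univ, true_and, Fintype.mem_piFinset, mem_compl]
    exact ⟨fun h i hi => h _ hi i rfl, fun h k hk i hi => h i (hi ▸ hk)⟩
  have hpow (t : Finset ι) :
      (∑ j ∈ tᶜ, z j) ^ Fintype.card ι = ∑ p ∈ t.inf missing, ∏ i, z (p i) := by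
    rw [hmissing, ← prod_univ_sum, prod_const, card_univ]
  have hperm : ∑ σ : Equiv.Perm ι, ∏ i, z (σ i)
      = ∑ p ∈ univ.inf fun k => (missing k)ᶜ, ∏ i, z (p i) := by
    refine sum_bij (fun σ _ => ⇑σ) (fun σ _ => ?_) (fun σ _ τ _ h => Equiv.ext (congrFun h))
      (fun p hp => ?_) (fun _ _ => rfl)
    all_goals simp only [missing, mem_inf, mem_compl, mem_filter, mem_univ, true_and, not_forall,
      not_not, forall_const] at *
    · exact σ.surjective
    · exact ⟨Equiv.ofBijective p ⟨Finite.injective_iff_surjective.mpr hp, hp⟩, trivial, rfl⟩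
  calc ∑ t ∈ univ.powerset, (-1) ^ #t * (∑ j ∈ tᶜ, z j) ^ Fintype.card ι
      = ∑ t ∈ univ.powerset, (-1) ^ #t • ∑ p ∈ t.inf missing, ∏ i, z (p i) := by
        simp only [hpow, zsmul_eq_mul]
        push_cast
        rfl
    _ = ∑ σ : Equiv.Perm ι, ∏ i, z (σ i) := by
        rw [← inclusion_exclusion_sum_inf_compl, hperm]
    _ = (Fintype.card ι).factorial * ∏ j, z j := by
        simp only [Equiv.prod_comp, sum_const, card_univ, Fintype.card_perm, nsmul_eq_mul]

theorem MvPolynomial.pderiv_pderiv_pow {σ R : Type*} [CommSemiring R] {ℓ : MvPolynomial σ R}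
    {i j : σ} (h : pderiv i (pderiv j ℓ) = 0) (m : ℕ) :
    pderiv i (pderiv j (ℓ ^ m))
      = ((m * (m - 1) : ℕ) : MvPolynomial σ R) * ℓ ^ (m - 2) * pderiv i ℓ * pderiv j ℓ := by
  rw [pderiv_pow, pderiv_mul, pderiv_mul, pderiv_pow, h, Derivation.map_natCast, Nat.sub_sub]
  push_cast
  ring

theorem Finset.sum_sum_mul_mul_mul_eq_mul_sq {ι : Type*} [Fintype ι] (c : ℝ) (a y : ι → ℝ) :
    ∑ i, ∑ j, y i * (c * a i * a j) * y j = c * (∑ i, a i * y i) ^ 2 := by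
  rw [sq, sum_mul_sum, mul_sum]
  refine sum_congr rfl fun i _ => ?_
  rw [mul_sum]
  exact sum_congr rfl fun j _ => by ring

namespace SosConvex

variable {n : ℕ}

theorem zero : SosConvex (0 : MvPolynomial (Fin n) ℝ) :=
  ⟨0, Fin.elim0, fun x y => by simp⟩

theorem add {g h : MvPolynomial (Fin n) ℝ} (hg : SosConvex g) (hh : SosConvex h) :
    SosConvex (g + h) := by
  obtain ⟨r, p, hp⟩ := hg
  obtain ⟨s, q, hq⟩ := hh
  refine ⟨r + s, Fin.append p q, fun x y => ?_⟩
  simp only [map_add, mul_add, add_mul, Finset.sum_add_distrib, hp, hq, Fin.sum_univ_add,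
    Fin.append_left, Fin.append_right]

theorem smul {g : MvPolynomial (Fin n) ℝ} (hg : SosConvex g) {c : ℝ} (hc : 0 ≤ c) :
    SosConvex (c • g) := by
  obtain ⟨r, q, hq⟩ := hg
  refine ⟨r, fun k => C √c * q k, fun x y => ?_⟩
  simp only [eval_mul, eval_C, mul_pow, Real.sq_sqrt hc, ← Finset.mul_sum, ← hq,
    Derivation.map_smul, smul_eval]
  simp only [Finset.mul_sum]
  exact Finset.sum_congr rfl fun i _ => Finset.sum_congr rfl fun j _ => by ring

theorem pow_two_mul {ℓ : MvPolynomial (Fin n) ℝ} (hℓ : ∀ i j, pderiv i (pderiv j ℓ) = 0)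
    (t : ℕ) : SosConvex (ℓ ^ (2 * t)) := by
  set c : ℕ := 2 * t * (2 * t - 1)
  refine ⟨1, fun _ => C √c * rename Sum.inl (ℓ ^ (t - 1)) *
    ∑ i, rename Sum.inl (pderiv i ℓ) * X (Sum.inr i), fun x y => ?_⟩
  have heval (p : MvPolynomial (Fin n) ℝ) :
      eval (Sum.elim x y) (rename Sum.inl p) = eval x p := by
    rw [eval_rename, Sum.elim_comp_inl]
  simp only [pderiv_pderiv_pow (hℓ _ _), eval_mul, eval_pow, map_natCast, Fin.sum_univ_one,
    eval_C, heval, eval_sum, eval_X, Sum.elim_inr]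
  rw [Finset.sum_sum_mul_mul_mul_eq_mul_sq, mul_pow, mul_pow, Real.sq_sqrt c.cast_nonneg, ← pow_mul,
    show (t - 1) * 2 = 2 * t - 2 by omega]

end SosConvex

def sosConvexCone (n d : ℕ) : ConvexCone ℝ (MvPolynomial (Fin n) ℝ) where
  carrier := {g | g.totalDegree ≤ 2 * d ∧ SosConvex g}
  smul_mem' _ hc _ hg := ⟨(totalDegree_smul_le _ _).trans hg.1, hg.2.smul hc.le⟩
  add_mem' _ hg _ hh := ⟨(totalDegree_add _ _).trans (max_le hg.1 hh.1), hg.2.add hh.2⟩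

variable {n d : ℕ}

theorem pow_mem_sosConvexCone {ℓ : MvPolynomial (Fin n) ℝ} (hdeg : ℓ.totalDegree ≤ 1)
    (hℓ : ∀ i j, pderiv i (pderiv j ℓ) = 0) : ℓ ^ (2 * d) ∈ sosConvexCone n d :=
  ⟨(totalDegree_pow _ _).trans (by nlinarith), SosConvex.pow_two_mul hℓ d⟩

theorem monomial_one_mem_span_sosConvexCone {α : Fin n →₀ ℕ}
    (hα : (α.sum fun _ e => e) ≤ 2 * d) :
    monomial α 1 ∈ Submodule.span ℝ (sosConvexCone n d : Set (MvPolynomial (Fin n) ℝ)) := by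
  classical
  set z : (Σ i, Fin (α i)) ⊕ Fin (2 * d - α.sum fun _ e => e) → MvPolynomial (Fin n) ℝ :=
    Sum.elim (fun p => X p.1) 1
  have hcard : Fintype.card ((Σ i, Fin (α i)) ⊕ Fin (2 * d - α.sum fun _ e => e)) = 2 * d := by
    simp only [Fintype.card_sum, Fintype.card_sigma, Fintype.card_fin]
    rw [Finsupp.sum_fintype _ _ fun _ => rfl] at hα ⊢
    omega
  have hprod : ∏ j, z j = monomial α 1 := by
    rw [monomial_eq, C_1, one_mul, Finsupp.prod_fintype _ _ fun _ => pow_zero _]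
    simp [z, Fintype.prod_sum_type, Fintype.prod_sigma]
  have haffine (s : Finset _) : (∑ j ∈ s, z j).totalDegree ≤ 1 ∧
      ∀ i k, pderiv i (pderiv k (∑ j ∈ s, z j)) = 0 := by
    refine ⟨(totalDegree_finsetSum _ _).trans (Finset.sup_le fun j _ => ?_), fun i k => ?_⟩
    · cases j <;> simp [z, totalDegree_X]
    · simp only [map_sum]
      refine Finset.sum_eq_zero fun j _ => ?_
      cases j <;> simp [z, pderiv_X, Pi.single_apply, apply_ite]
  have hpol := Finset.sum_powerset_neg_one_pow_card_mul_sum_compl_pow z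
  rw [hcard, hprod, ← nsmul_eq_mul, ← Nat.cast_smul_eq_nsmul ℝ] at hpol
  rw [← Submodule.smul_mem_iff _ (s := ((2 * d).factorial : ℝ)) (by positivity), ← hpol]
  refine Submodule.sum_mem _ fun t _ => ?_
  have hmem := Submodule.subset_span (R := ℝ)
    (pow_mem_sosConvexCone (d := d) (haffine tᶜ).1 (haffine tᶜ).2)
  rcases neg_one_pow_eq_or (MvPolynomial (Fin n) ℝ) t.card with h | h
  · rwa [h, one_mul]
  · rw [h, neg_one_mul]
    exact Submodule.neg_mem _ hmem

theorem restrictTotalDegree_le_span_sosConvexCone :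
    restrictTotalDegree (Fin n) ℝ (2 * d)
      ≤ Submodule.span ℝ (sosConvexCone n d : Set (MvPolynomial (Fin n) ℝ)) := by
  intro p hp
  rw [mem_restrictTotalDegree] at hp
  rw [← p.support_sum_monomial_coeff]
  refine Submodule.sum_mem _ fun α hα => ?_
  rw [← mul_one (coeff α p), ← smul_eq_mul, ← smul_monomial]
  exact Submodule.smul_mem _ _
    (monomial_one_mem_span_sosConvexCone ((le_totalDegree hα).trans hp))

theorem sosConvexCone_comap_isReproducing :
    ((sosConvexCone n d).comap (restrictTotalDegree (Fin n) ℝ (2 * d)).subtype).IsReproducing := by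
  have : Nontrivial (restrictTotalDegree (Fin n) ℝ (2 * d)) :=
    ⟨⟨⟨1, by simp [mem_restrictTotalDegree]⟩, 0, fun h => one_ne_zero (congrArg Subtype.val h)⟩⟩
  refine .of_span_eq_top ?_
  rw [ConvexCone.coe_comap, Submodule.span_preimage_eq
    ⟨0, show (0 : MvPolynomial (Fin n) ℝ) ∈ sosConvexCone n d from ⟨by simp, SosConvex.zero⟩⟩,
    Submodule.comap_subtype_eq_top]
  · exact restrictTotalDegree_le_span_sosConvexCone
  · exact fun g hg => ⟨⟨g, (mem_restrictTotalDegree _ _ _).mpr hg.1⟩, rfl⟩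

theorem sos_convex_dcd_exists
    {n d : ℕ} (f : MvPolynomial (Fin n) ℝ) (hdeg : f.totalDegree ≤ 2 * d) :
    ∃ g h : MvPolynomial (Fin n) ℝ,
      g.totalDegree ≤ 2 * d ∧ h.totalDegree ≤ 2 * d ∧
      SosConvex g ∧ SosConvex h ∧ f = g - h := by
  have hf : (⟨f, (mem_restrictTotalDegree _ _ _).mpr hdeg⟩ :
      restrictTotalDegree (Fin n) ℝ (2 * d)) ∈ Set.univ := Set.mem_univ _
  rw [← sosConvexCone_comap_isReproducing.sub_eq_univ] at hf
  obtain ⟨g, ⟨hg_deg, hg⟩, h, ⟨hh_deg, hh⟩, hgh⟩ := hf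
  exact ⟨g, h, hg_deg, hh_deg, hg, hh, (congrArg Subtype.val hgh).symm⟩
end
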